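/- Let 0<q<1 and 0<α<1, and for an integer k≥1 set M_q(k) := Γ_q(α+1)^{−1}/Γ_q(α(k−1)+1) − 1/Γ_q(αk+1). Then there exist a constant c>0 and an integer K≥1, both depending only on q and α, such that for every integer k≥K one has M_q(k) ≥ c·(1−q)^{(α−1)k}/Γ_q(k+1). -/

import Mathlib

open scoped BigOperators

/-- The infinite q-Pochhammer symbol `(a;q)_∞ = ∏_{j=0}^∞ (1 - q^j a)`. -/
noncomputable def qPochInf (q a : ℝ) : ℝ := ∏' j : ℕ, (1 - q ^ j * a)

/-- The q-gamma function `Γ_q(x) = ((q;q)_∞/(q^x;q)_∞)·(1-q)^{1-x}`. -/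
noncomputable def qGamma (q x : ℝ) : ℝ :=
  (qPochInf q q / qPochInf q (q ^ x)) * (1 - q) ^ (1 - x)

/-- `M_q(k) = Γ_q(α+1)⁻¹/Γ_q(α(k−1)+1) − 1/Γ_q(αk+1)`. -/
noncomputable def Mq (q α : ℝ) (k : ℕ) : ℝ :=
  (qGamma q (α + 1))⁻¹ / qGamma q (α * ((k : ℝ) - 1) + 1) - 1 / qGamma q (α * k + 1)

/-!
Write `P a := (a;q)_∞`. Since `1/Γ_q(x) = P(q^x)/P(q) · (1-q)^{x-1}`, factoring out
`(1-q)^{αk}/P(q)` turns the claim into `c · P(q^{k+1}) ≤ A · P(q^{α(k-1)+1}) - P(q^{αk+1})`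
with `A = P(q^{α+1})/P(q)`. The recursion `P a = (1-a) P(qa)` makes `P` strictly decreasing on
`[0,1)`, so `A > 1`. On `[0,1]` we have `1 - a/(1-q) ≤ P a ≤ 1`, hence `P(q^{α(k-1)+1}) → 1`, and
the right-hand side is eventually at least `(A-1)/2`, which is then a valid choice of `c`.
-/

open Filter Topology

lemma Finset.one_sub_sum_le_prod_one_sub {ι : Type*} (s : Finset ι) {x : ι → ℝ}
    (h0 : ∀ i ∈ s, 0 ≤ x i) (h1 : ∀ i ∈ s, x i ≤ 1) :
    1 - ∑ i ∈ s, x i ≤ ∏ i ∈ s, (1 - x i) := by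
  induction s using Finset.cons_induction with
  | empty => simp
  | cons a s _ ih =>
    simp only [Finset.mem_cons, forall_eq_or_imp] at h0 h1
    rw [Finset.prod_cons, Finset.sum_cons]
    have hs : 0 ≤ ∑ i ∈ s, x i := Finset.sum_nonneg h0.2
    have hp : 0 ≤ ∏ i ∈ s, (1 - x i) := Finset.prod_nonneg fun i hi => sub_nonneg.2 (h1.2 i hi)
    nlinarith [ih h0.2 h1.2, h0.1, h1.1]

section qPochInf

variable {q a b : ℝ}

lemma multipliable_one_sub_pow_mul (hq : |q| < 1) (a : ℝ) :
    Multipliable fun j : ℕ => 1 - q ^ j * a := by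
  simpa [sub_eq_add_neg] using
    Real.multipliable_one_add_of_summable ((summable_geometric_of_abs_lt_one hq).mul_right a).neg

lemma hasProd_qPochInf (hq : |q| < 1) (a : ℝ) :
    HasProd (fun j : ℕ => 1 - q ^ j * a) (qPochInf q a) :=
  (multipliable_one_sub_pow_mul hq a).hasProd

lemma qPochInf_eq_one_sub_mul (hq : |q| < 1) (a : ℝ) :
    qPochInf q a = (1 - a) * qPochInf q (q * a) := by
  have hm : Multipliable fun j : ℕ => 1 - q ^ (j + 1) * a := by
    refine (multipliable_one_sub_pow_mul hq (q * a)).congr fun j => ?_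
    ring
  rw [qPochInf, tprod_eq_zero_mul' (f := fun j : ℕ => 1 - q ^ j * a) hm, qPochInf]
  simp only [pow_zero, one_mul, pow_succ, mul_assoc]

lemma one_sub_pow_mul_pos (hq0 : 0 ≤ q) (hq1 : q ≤ 1) (ha : a < 1) (j : ℕ) :
    0 < 1 - q ^ j * a := by
  rcases le_total 0 a with ha0 | ha0
  · linarith [mul_le_of_le_one_left ha0 (pow_le_one₀ hq0 hq1 (n := j))]
  · linarith [mul_nonpos_of_nonneg_of_nonpos (pow_nonneg hq0 j) ha0]

lemma qPochInf_pos (hq0 : 0 ≤ q) (hq1 : q < 1) (ha : a < 1) : 0 < qPochInf q a := by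
  have hlog : Summable fun j : ℕ => Real.log (1 - q ^ j * a) := by
    simpa [sub_eq_add_neg] using Real.summable_log_one_add_of_summable
      ((summable_geometric_of_lt_one hq0 hq1).mul_right a).neg
  rw [qPochInf, ← Real.rexp_tsum_eq_tprod (one_sub_pow_mul_pos hq0 hq1.le ha) hlog]
  exact Real.exp_pos _

lemma qPochInf_le_one (hq0 : 0 ≤ q) (hq1 : q < 1) (ha0 : 0 ≤ a) (ha1 : a ≤ 1) :
    qPochInf q a ≤ 1 := by
  have hq : |q| < 1 := by rwa [abs_of_nonneg hq0]
  refine hasProd_le_of_prod_le (hasProd_qPochInf hq a) fun s => Finset.prod_le_one ?_ ?_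
  · intro j _
    exact sub_nonneg.2 (mul_le_one₀ (pow_le_one₀ hq0 hq1.le) ha0 ha1)
  · intro j _
    exact sub_le_self _ (mul_nonneg (pow_nonneg hq0 j) ha0)

lemma one_sub_div_le_qPochInf (hq0 : 0 ≤ q) (hq1 : q < 1) (ha0 : 0 ≤ a) (ha1 : a ≤ 1) :
    1 - a / (1 - q) ≤ qPochInf q a := by
  have hq : |q| < 1 := by rwa [abs_of_nonneg hq0]
  have hterm0 : ∀ j : ℕ, 0 ≤ q ^ j * a := fun j => mul_nonneg (pow_nonneg hq0 j) ha0
  refine le_hasProd_of_le_prod (hasProd_qPochInf hq a) fun s => ?_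
  have hsum : ∑ j ∈ s, q ^ j * a ≤ a / (1 - q) := by
    rw [div_eq_inv_mul]
    exact sum_le_hasSum s (fun j _ => hterm0 j) ((hasSum_geometric_of_lt_one hq0 hq1).mul_right a)
  have hweier := Finset.one_sub_sum_le_prod_one_sub s (fun j _ => hterm0 j)
    (fun j _ => mul_le_one₀ (pow_le_one₀ hq0 hq1.le) ha0 ha1)
  linarith

lemma qPochInf_anti (hq0 : 0 ≤ q) (hq1 : q < 1) (ha0 : 0 ≤ a) (hab : a ≤ b) (hb : b ≤ 1) :
    qPochInf q b ≤ qPochInf q a := by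
  have hq : |q| < 1 := by rwa [abs_of_nonneg hq0]
  refine le_of_tendsto_of_tendsto' (hasProd_qPochInf hq b) (hasProd_qPochInf hq a) fun s => ?_
  refine Finset.prod_le_prod (fun j _ => ?_) fun j _ => ?_
  · exact sub_nonneg.2 (mul_le_one₀ (pow_le_one₀ hq0 hq1.le) (ha0.trans hab) hb)
  · exact sub_le_sub_left (mul_le_mul_of_nonneg_left hab (pow_nonneg hq0 j)) 1

lemma qPochInf_lt_qPochInf (hq0 : 0 ≤ q) (hq1 : q < 1) (ha0 : 0 ≤ a) (hab : a < b)
    (hb : b < 1) : qPochInf q b < qPochInf q a := by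
  have hq : |q| < 1 := by rwa [abs_of_nonneg hq0]
  have hqa : q * a < 1 := by nlinarith
  have hqb : q * b ≤ 1 := by nlinarith
  calc qPochInf q b = (1 - b) * qPochInf q (q * b) := qPochInf_eq_one_sub_mul hq b
    _ ≤ (1 - b) * qPochInf q (q * a) :=
      mul_le_mul_of_nonneg_left (qPochInf_anti hq0 hq1 (by positivity)
        (mul_le_mul_of_nonneg_left hab.le hq0) hqb) (by linarith)
    _ < (1 - a) * qPochInf q (q * a) :=
      mul_lt_mul_of_pos_right (by linarith) (qPochInf_pos hq0 hq1 hqa)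
    _ = qPochInf q a := (qPochInf_eq_one_sub_mul hq a).symm

lemma tendsto_qPochInf_nhdsGE_zero (hq0 : 0 ≤ q) (hq1 : q < 1) :
    Tendsto (qPochInf q) (𝓝[≥] 0) (𝓝 1) := by
  have hlower : Tendsto (fun a : ℝ => 1 - a / (1 - q)) (𝓝[≥] 0) (𝓝 1) := by
    have hcont : Continuous fun a : ℝ => 1 - a / (1 - q) := by fun_prop
    simpa using (hcont.tendsto 0).mono_left nhdsWithin_le_nhds
  have hmem : ∀ᶠ a in 𝓝[≥] (0 : ℝ), 0 ≤ a ∧ a ≤ 1 :=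
    eventually_mem_nhdsWithin.and (nhdsWithin_le_nhds (Iic_mem_nhds one_pos))
  refine tendsto_of_tendsto_of_tendsto_of_le_of_le' hlower tendsto_const_nhds ?_ ?_
  · filter_upwards [hmem] with a ha using one_sub_div_le_qPochInf hq0 hq1 ha.1 ha.2
  · filter_upwards [hmem] with a ha using qPochInf_le_one hq0 hq1 ha.1 ha.2

lemma tendsto_qPochInf_rpow {ι : Type*} {l : Filter ι} {f : ι → ℝ} (hq0 : 0 < q) (hq1 : q < 1)
    (hf : Tendsto f l atTop) : Tendsto (fun i => qPochInf q (q ^ f i)) l (𝓝 1) := by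
  have hbase : Tendsto (fun i => q ^ f i) l (𝓝[≥] 0) :=
    tendsto_nhdsWithin_iff.2 ⟨(tendsto_rpow_atTop_of_base_lt_one q (by linarith) hq1).comp hf,
      Eventually.of_forall fun i => Real.rpow_nonneg hq0.le _⟩
  exact (tendsto_qPochInf_nhdsGE_zero hq0.le hq1).comp hbase

end qPochInf

section qGamma

variable {q : ℝ}

lemma inv_qGamma (hq : q ≤ 1) (x : ℝ) :
    (qGamma q x)⁻¹ = qPochInf q (q ^ x) / qPochInf q q * (1 - q) ^ (x - 1) := by
  rw [qGamma, mul_inv, inv_div, ← Real.rpow_neg (sub_nonneg.2 hq), neg_sub]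

lemma rpow_div_qGamma_add_one (hq : q < 1) (β x : ℝ) :
    (1 - q) ^ ((β - 1) * x) / qGamma q (x + 1) =
      (1 - q) ^ (β * x) / qPochInf q q * qPochInf q (q ^ (x + 1)) := by
  have hsplit : (1 - q) ^ (β * x) = (1 - q) ^ ((β - 1) * x) * (1 - q) ^ x := by
    rw [← Real.rpow_add (sub_pos.2 hq)]; ring_nf
  rw [div_eq_mul_inv, inv_qGamma hq.le, add_sub_cancel_right, hsplit]
  ring

lemma Mq_eq (hq : q < 1) (α : ℝ) (k : ℕ) :
    Mq q α k = (1 - q) ^ (α * k) / qPochInf q q *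
      (qPochInf q (q ^ (α + 1)) / qPochInf q q * qPochInf q (q ^ (α * ((k : ℝ) - 1) + 1)) -
        qPochInf q (q ^ (α * k + 1))) := by
  have hsplit : (1 - q) ^ (α * (k : ℝ)) = (1 - q) ^ α * (1 - q) ^ (α * ((k : ℝ) - 1)) := by
    rw [← Real.rpow_add (sub_pos.2 hq)]; ring_nf
  rw [Mq, div_eq_mul_inv, one_div, inv_qGamma hq.le, inv_qGamma hq.le, inv_qGamma hq.le,
    add_sub_cancel_right, add_sub_cancel_right, add_sub_cancel_right, hsplit]
  ring

end qGamma

theorem Mq_lower_bound_general (q α : ℝ) (hq0 : 0 < q) (hq1 : q < 1) (hα0 : 0 < α) :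
    ∃ c : ℝ, 0 < c ∧ ∃ K : ℕ, 1 ≤ K ∧ ∀ k : ℕ, K ≤ k →
      c * ((1 - q) ^ ((α - 1) * k) / qGamma q ((k : ℝ) + 1)) ≤ Mq q α k := by
  set A := qPochInf q (q ^ (α + 1)) / qPochInf q q
  have hA : 1 < A := by
    refine (one_lt_div (qPochInf_pos hq0.le hq1 hq1)).2
      (qPochInf_lt_qPochInf hq0.le hq1 (by positivity) ?_ hq1)
    simpa using Real.rpow_lt_rpow_of_exponent_gt hq0 hq1 (by linarith : (1 : ℝ) < α + 1)
  have hexp : Tendsto (fun k : ℕ => α * ((k : ℝ) - 1) + 1) atTop atTop :=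
    tendsto_atTop_add_const_right _ 1 <| Tendsto.const_mul_atTop hα0 <|
      tendsto_atTop_add_const_right _ (-1) tendsto_natCast_atTop_atTop
  have hlim : Tendsto (fun k : ℕ => A * qPochInf q (q ^ (α * ((k : ℝ) - 1) + 1))) atTop (𝓝 A) := by
    simpa using (tendsto_qPochInf_rpow hq0 hq1 hexp).const_mul A
  obtain ⟨K, hK⟩ :=
    eventually_atTop.1 (hlim.eventually (lt_mem_nhds (by linarith : (A + 1) / 2 < A)))
  refine ⟨(A - 1) / 2, by linarith, max K 1, le_max_right K 1, fun k hk => ?_⟩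
  have hP_le_one : ∀ x : ℝ, 0 ≤ x → qPochInf q (q ^ x) ≤ 1 := fun x hx =>
    qPochInf_le_one hq0.le hq1 (by positivity) (Real.rpow_le_one hq0.le hq1.le hx)
  have hkey : (A - 1) / 2 * qPochInf q (q ^ ((k : ℝ) + 1)) ≤
      A * qPochInf q (q ^ (α * ((k : ℝ) - 1) + 1)) - qPochInf q (q ^ (α * k + 1)) := by
    calc (A - 1) / 2 * qPochInf q (q ^ ((k : ℝ) + 1)) ≤ (A - 1) / 2 :=
          mul_le_of_le_one_right (by linarith) (hP_le_one _ (by positivity))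
      _ ≤ _ := by linarith [hK k (le_of_max_le_left hk), hP_le_one (α * k + 1) (by positivity)]
  rw [rpow_div_qGamma_add_one hq1, Mq_eq hq1, mul_left_comm]
  exact mul_le_mul_of_nonneg_left hkey (div_nonneg (by positivity) (qPochInf_pos hq0.le hq1 hq1).le)

theorem Mq_lower_bound (q α : ℝ) (hq0 : 0 < q) (hq1 : q < 1)
    (hα0 : 0 < α) (hα1 : α < 1) :
    ∃ c : ℝ, 0 < c ∧ ∃ K : ℕ, 1 ≤ K ∧ ∀ k : ℕ, K ≤ k →
      c * ((1 - q) ^ ((α - 1) * k) / qGamma q ((k : ℝ) + 1)) ≤ Mq q α k :=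
  Mq_lower_bound_general q α hq0 hq1 hα0
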